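/- arXiv:2009.11262 — 2 statements merged into one kernel-verified Lean document; each statement's English description precedes it below -/
import Mathlib

section
/- Let Ω ⊆ ℝ^d be open and bounded, p ∈ (1,∞), and (μ,f), (ν,g) ∈ TL^p. Let μ̃ = (Id × f)_* μ and ν̃ = (Id × g)_* ν be the pushforward measures on Λ = Ω × ℝ^m supported on the graphs of f and g. Then d_TLp^p((μ,f),(ν,g)) = inf_{π̃ ∈ Π(μ̃,ν̃)} ∫_{Λ×Λ} |𝐱 − 𝐲|_p^p dπ̃(𝐱,𝐲) = d_Wp^p(μ̃, ν̃); that is, the TL^p distance equals the p-Wasserstein distance between the lifted measures on the graphs. -/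
/-!
Lifting a plan `π` between `μ` and `ν` to `(Prod.map (Id × f) (Id × g))_* π` preserves its cost and
gives a plan between the lifted measures. Conversely, a plan between the lifted measures is
concentrated on the product of the two graphs, which is the range of a measurable embedding, so it
is the lift of a plan between `μ` and `ν`. Both transport problems therefore take the infimum of
the same set of costs.
-/

open MeasureTheory Filter Topology

/-- `∑ i, |v i|^p`, the p-th power of the ℓ^p norm on ℝ^k. -/
noncomputable def lpPow (p : ℝ) {k : ℕ} (v : Fin k → ℝ) : ℝ := ∑ i, |v i| ^ p

/-- `π` is a coupling (transport plan) between `μ` and `ν`. -/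
def IsCoupling {α β : Type*} [MeasurableSpace α] [MeasurableSpace β]
    (π : Measure (α × β)) (μ : Measure α) (ν : Measure β) : Prop :=
  π.map Prod.fst = μ ∧ π.map Prod.snd = ν

/-- The Kantorovich optimal transport cost for a cost function `c`. -/
noncomputable def OTCost {α β : Type*} [MeasurableSpace α] [MeasurableSpace β]
    (c : α → β → ℝ) (μ : Measure α) (ν : Measure β) : ℝ :=
  ⨅ π : {π : Measure (α × β) // IsCoupling π μ ν},
    ∫ z, c z.1 z.2 ∂(π : Measure (α × β))

/-- The TL^p distance between `(μ, f)` and `(ν, g)`. -/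
noncomputable def dTLp (p : ℝ) {d m : ℕ} (μ ν : Measure (Fin d → ℝ))
    (f g : (Fin d → ℝ) → Fin m → ℝ) : ℝ :=
  (OTCost (fun x y => lpPow p (x - y) + lpPow p (f x - g y)) μ ν) ^ (1 / p)

/-- The p-Wasserstein distance on `Λ = ℝ^d × ℝ^m`, for the ℓ^p ground cost
`|𝐱 − 𝐲|_p^p = |x₁ − y₁|_p^p + |x₂ − y₂|_p^p`. -/
noncomputable def dWpProd (p : ℝ) {d m : ℕ}
    (α β : Measure ((Fin d → ℝ) × (Fin m → ℝ))) : ℝ :=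
  (OTCost (fun a b => lpPow p (a.1 - b.1) + lpPow p (a.2 - b.2)) α β) ^ (1 / p)

open Set

lemma lpPow_nonneg (p : ℝ) {k : ℕ} (v : Fin k → ℝ) : 0 ≤ lpPow p v :=
  Finset.sum_nonneg fun _ _ => Real.rpow_nonneg (abs_nonneg _) p

lemma measurableEmbedding_graph {α γ : Type*} [MeasurableSpace α] [MeasurableSpace γ]
    [MeasurableEq γ] {f : α → γ} (hf : Measurable f) :
    MeasurableEmbedding fun x => (x, f x) := by
  have hrange : range (fun x => (x, f x)) = {a : α × γ | f a.1 = a.2} := by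
    ext ⟨x, y⟩
    simp [eq_comm]
  refine .of_measurable_inverse (measurable_id.prodMk hf) ?_ measurable_fst fun _ => rfl
  rw [hrange]
  exact measurableSet_eq_fun (hf.comp measurable_fst) measurable_snd

section Coupling

variable {α β α' β' : Type*} [MeasurableSpace α] [MeasurableSpace β] [MeasurableSpace α']
  [MeasurableSpace β'] {μ : Measure α} {ν : Measure β} {φ : α → α'} {ψ : β → β'}

lemma IsCoupling.map_prodMap {π : Measure (α × β)} (h : IsCoupling π μ ν) (hφ : Measurable φ)
    (hψ : Measurable ψ) : IsCoupling (π.map (Prod.map φ ψ)) (μ.map φ) (ν.map ψ) := by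
  constructor
  · rw [Measure.map_map measurable_fst (hφ.prodMap hψ), ← h.1, Measure.map_map hφ measurable_fst]
    rfl
  · rw [Measure.map_map measurable_snd (hφ.prodMap hψ), ← h.2, Measure.map_map hψ measurable_snd]
    rfl

lemma IsCoupling.ae_mem_range_prodMap {π : Measure (α' × β')}
    (h : IsCoupling π (μ.map φ) (ν.map ψ)) (hφ : MeasurableEmbedding φ)
    (hψ : MeasurableEmbedding ψ) : ∀ᵐ z ∂π, z ∈ range (Prod.map φ ψ) := by
  have hfst : ∀ᵐ z ∂π, z.1 ∈ range φ := by
    refine ae_of_ae_map measurable_fst.aemeasurable ?_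
    rw [h.1, hφ.ae_map_iff]
    exact ae_of_all _ fun x => mem_range_self x
  have hsnd : ∀ᵐ z ∂π, z.2 ∈ range ψ := by
    refine ae_of_ae_map measurable_snd.aemeasurable ?_
    rw [h.2, hψ.ae_map_iff]
    exact ae_of_all _ fun y => mem_range_self y
  filter_upwards [hfst, hsnd] with z h₁ h₂
  rw [range_prodMap]
  exact ⟨h₁, h₂⟩

lemma IsCoupling.of_map_prodMap {π : Measure (α × β)}
    (h : IsCoupling (π.map (Prod.map φ ψ)) (μ.map φ) (ν.map ψ)) (hφ : MeasurableEmbedding φ)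
    (hψ : MeasurableEmbedding ψ) : IsCoupling π μ ν := by
  have hΦ := (hφ.prodMap hψ).measurable
  constructor
  · refine hφ.map_injective ?_
    rw [Measure.map_map hφ.measurable measurable_fst, ← h.1, Measure.map_map measurable_fst hΦ]
    rfl
  · refine hψ.map_injective ?_
    rw [Measure.map_map hψ.measurable measurable_snd, ← h.2, Measure.map_map measurable_snd hΦ]
    rfl

lemma IsCoupling.exists_map_prodMap_eq {π' : Measure (α' × β')}
    (h : IsCoupling π' (μ.map φ) (ν.map ψ)) (hφ : MeasurableEmbedding φ)
    (hψ : MeasurableEmbedding ψ) :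
    ∃ π : Measure (α × β), IsCoupling π μ ν ∧ π.map (Prod.map φ ψ) = π' := by
  have hmap : (π'.comap (Prod.map φ ψ)).map (Prod.map φ ψ) = π' := by
    rw [(hφ.prodMap hψ).map_comap,
      Measure.restrict_eq_self_of_ae_mem (h.ae_mem_range_prodMap hφ hψ)]
  refine ⟨_, IsCoupling.of_map_prodMap ?_ hφ hψ, hmap⟩
  rwa [hmap]

lemma OTCost_nonneg {c : α → β → ℝ} (hc : ∀ a b, 0 ≤ c a b) (μ : Measure α) (ν : Measure β) :
    0 ≤ OTCost c μ ν :=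
  Real.iInf_nonneg fun _ => integral_nonneg fun _ => hc _ _

lemma OTCost_rpow_one_div_rpow {c : α → β → ℝ} (hc : ∀ a b, 0 ≤ c a b) (μ : Measure α)
    (ν : Measure β) {p : ℝ} (hp : p ≠ 0) : (OTCost c μ ν ^ (1 / p)) ^ p = OTCost c μ ν := by
  rw [one_div, Real.rpow_inv_rpow (OTCost_nonneg hc μ ν) hp]

theorem OTCost_map_eq (C : α' → β' → ℝ) (μ : Measure α) (ν : Measure β)
    (hφ : MeasurableEmbedding φ) (hψ : MeasurableEmbedding ψ) :
    OTCost C (μ.map φ) (ν.map ψ) = OTCost (fun x y => C (φ x) (ψ y)) μ ν := by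
  -- Via the embedding, this holds with no measurability or integrability assumption on `C`.
  have hcost : ∀ π : Measure (α × β),
      ∫ z, C z.1 z.2 ∂π.map (Prod.map φ ψ) = ∫ z, C (φ z.1) (ψ z.2) ∂π :=
    fun π => (hφ.prodMap hψ).integral_map _
  show sInf (range _) = sInf (range _)
  congr 1
  ext r
  constructor
  · rintro ⟨⟨π', hπ'⟩, rfl⟩
    obtain ⟨π, hπ, rfl⟩ := hπ'.exists_map_prodMap_eq hφ hψ
    exact ⟨⟨π, hπ⟩, (hcost π).symm⟩
  · rintro ⟨⟨π, hπ⟩, rfl⟩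
    exact ⟨⟨_, hπ.map_prodMap hφ.measurable hψ.measurable⟩, hcost π⟩

end Coupling

theorem OTCost_map_graph {α β γ δ : Type*} [MeasurableSpace α] [MeasurableSpace β]
    [MeasurableSpace γ] [MeasurableSpace δ] [MeasurableEq γ] [MeasurableEq δ]
    (C : α × γ → β × δ → ℝ) (μ : Measure α) (ν : Measure β) {f : α → γ} {g : β → δ}
    (hf : Measurable f) (hg : Measurable g) :
    OTCost C (μ.map fun x => (x, f x)) (ν.map fun y => (y, g y))
      = OTCost (fun x y => C (x, f x) (y, g y)) μ ν :=
  OTCost_map_eq C μ ν (measurableEmbedding_graph hf) (measurableEmbedding_graph hg)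

theorem tlp_eq_wasserstein_on_graphs_general {d m : ℕ} (p : ℝ) (hp1 : 1 < p)
    (μ ν : Measure (Fin d → ℝ)) (f g : (Fin d → ℝ) → Fin m → ℝ)
    (hf : Measurable f) (hg : Measurable g) :
    dTLp p μ ν f g ^ p
      = OTCost (fun a b => lpPow p (a.1 - b.1) + lpPow p (a.2 - b.2))
          (μ.map (fun x => (x, f x))) (ν.map (fun x => (x, g x))) ∧
    dTLp p μ ν f g ^ p
      = dWpProd p (μ.map (fun x => (x, f x))) (ν.map (fun x => (x, g x))) ^ p := by
  have hp : p ≠ 0 := (zero_lt_one.trans hp1).ne'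
  have hTL : dTLp p μ ν f g ^ p
      = OTCost (fun a b => lpPow p (a.1 - b.1) + lpPow p (a.2 - b.2))
          (μ.map (fun x => (x, f x))) (ν.map (fun x => (x, g x))) := by
    rw [dTLp, OTCost_rpow_one_div_rpow (fun _ _ => add_nonneg (lpPow_nonneg _ _)
      (lpPow_nonneg _ _)) μ ν hp, OTCost_map_graph _ μ ν hf hg]
  refine ⟨hTL, hTL.trans ?_⟩
  rw [dWpProd, OTCost_rpow_one_div_rpow (fun _ _ => add_nonneg (lpPow_nonneg _ _)
    (lpPow_nonneg _ _)) _ _ hp]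

/-- the TL^p distance equals the p-Wasserstein distance between the
lifted measures `μ̃ = (Id × f)_*μ` and `ν̃ = (Id × g)_*ν` on the graphs of `f` and `g`. -/
theorem tlp_eq_wasserstein_on_graphs {d m : ℕ} (Ω : Set (Fin d → ℝ)) (hΩo : IsOpen Ω)
    (hΩb : Bornology.IsBounded Ω) (p : ℝ) (hp1 : 1 < p)
    (μ ν : Measure (Fin d → ℝ)) (f g : (Fin d → ℝ) → Fin m → ℝ)
    (hμ : IsProbabilityMeasure μ) (hν : IsProbabilityMeasure ν)
    (hμΩ : μ Ωᶜ = 0) (hνΩ : ν Ωᶜ = 0)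
    (hf : Measurable f) (hg : Measurable g)
    (hfLp : MemLp f (ENNReal.ofReal p) μ) (hgLp : MemLp g (ENNReal.ofReal p) ν) :
    dTLp p μ ν f g ^ p
      = OTCost (fun a b => lpPow p (a.1 - b.1) + lpPow p (a.2 - b.2))
          (μ.map (fun x => (x, f x))) (ν.map (fun x => (x, g x))) ∧
    dTLp p μ ν f g ^ p
      = dWpProd p (μ.map (fun x => (x, f x))) (ν.map (fun x => (x, g x))) ^ p :=
  tlp_eq_wasserstein_on_graphs_general p hp1 μ ν f g hf hg
end

section
/- Let C ∈ ℝ^{m×n}, ε > 0, K_{ij} = exp(−C_{ij}/ε), and let p ∈ ℝ^m, q ∈ ℝ^n be probability vectors with strictly positive entries. Then the minimiser π† of Σ_{i,j} C_{ij} π_{ij} − ε H(π) over the transport polytope U(p,q) exists, is unique, and has the form π† = diag(u) K diag(v) for some vectors u ∈ ℝ_{>0}^m and v ∈ ℝ_{>0}^n; equivalently, there exist positive scaling vectors u, v such that diag(u) K diag(v) has row sums p and column sums q, and this matrix is the unique minimiser. -/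
/-!
The objective is continuous on the compact polytope `U(a,b)` and strictly convex (because
`x log x` is), so it has exactly one minimiser `π`. Since `x log x` has slope `-∞` at `0`, moving
from `π` towards the strictly positive plan `a ⊗ b` would lower the objective if some entry of
`π` vanished; hence `π > 0`, and `π` is a critical point along every direction with zero row and
column sums. The directions `(eᵢ - eᵢ') ⊗ (eⱼ - eⱼ')` show that `log (πᵢⱼ / Kᵢⱼ)` is of the form
`fᵢ + gⱼ`, i.e. `π = diag(exp f) K diag(exp g)`.
-/

open Finset

/-- The transport polytope `U(a,b)`: nonnegative matrices with row sums `a` and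
column sums `b`. -/
def InPolytope {m n : ℕ} (a : Fin m → ℝ) (b : Fin n → ℝ) (π : Fin m → Fin n → ℝ) : Prop :=
  (∀ i j, 0 ≤ π i j) ∧ (∀ i, ∑ j, π i j = a i) ∧ (∀ j, ∑ i, π i j = b j)

/-- The Shannon entropy `H(π) = −∑ π_{ij} log π_{ij}` (with `0 log 0 = 0`,
as `Real.log 0 = 0`). -/
noncomputable def shannonH {m n : ℕ} (π : Fin m → Fin n → ℝ) : ℝ :=
  -∑ i, ∑ j, π i j * Real.log (π i j)

/-- The entropy-regularised transport objective `∑ C_{ij} π_{ij} − ε H(π)`. -/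
noncomputable def entObj {m n : ℕ} (C : Fin m → Fin n → ℝ) (ε : ℝ)
    (π : Fin m → Fin n → ℝ) : ℝ :=
  (∑ i, ∑ j, C i j * π i j) - ε * shannonH π

open Filter Topology

lemma Fintype.sum_le_apply_of_nonpos {ι M : Type*} [Fintype ι] [AddCommGroup M] [PartialOrder M]
    [IsOrderedAddMonoid M] {f : ι → M} (hf : ∀ i, f i ≤ 0) (k : ι) : ∑ i, f i ≤ f k := by
  simpa using single_le_sum (f := -f) (fun i _ => neg_nonneg.2 (hf i)) (mem_univ k)

noncomputable def entCost (c ε x : ℝ) : ℝ := c * x + ε * (x * Real.log x)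

section EntCost

variable {c ε : ℝ}

lemma strictConvexOn_entCost (hε : 0 < ε) : StrictConvexOn ℝ (Set.Ici 0) (entCost c ε) := by
  refine ⟨convex_Ici 0, fun x hx y hy hxy s t hs ht hst => ?_⟩
  have h := Real.strictConvexOn_mul_log.2 hx hy hxy hs ht hst
  simp only [entCost, smul_eq_mul] at h ⊢
  nlinarith [mul_lt_mul_of_pos_left h hε]

lemma hasDerivAt_entCost {x : ℝ} (hx : x ≠ 0) :
    HasDerivAt (entCost c ε) (c + ε * (Real.log x + 1)) x := by
  have h := ((hasDerivAt_id' x).const_mul c).fun_add ((Real.hasDerivAt_mul_log hx).const_mul ε)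
  rw [mul_one] at h
  exact h

lemma entCost_mul (t y : ℝ) :
    entCost c ε (t * y) = t * entCost c ε y + ε * (t * y) * Real.log t := by
  rcases eq_or_ne t 0 with rfl | ht
  · simp [entCost]
  rcases eq_or_ne y 0 with rfl | hy
  · simp [entCost]
  simp only [entCost, Real.log_mul ht hy]
  ring

lemma entCost_add_mul_sub_le {x y t : ℝ} (hε : 0 < ε) (hx : 0 ≤ x) (hy : 0 ≤ y) (ht0 : 0 ≤ t)
    (ht1 : t ≤ 1) :
    entCost c ε (x + t * (y - x)) ≤ entCost c ε x + t * (entCost c ε y - entCost c ε x) := by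
  have h := (strictConvexOn_entCost (c := c) hε).convexOn.2 (Set.mem_Ici.2 hx) (Set.mem_Ici.2 hy)
    (sub_nonneg.2 ht1) ht0 (sub_add_cancel 1 t)
  rw [show x + t * (y - x) = (1 - t) * x + t * y by ring]
  simp only [smul_eq_mul] at h
  linarith

end EntCost

section Polytope

variable {m n : ℕ} {a : Fin m → ℝ} {b : Fin n → ℝ}

lemma convex_polytope : Convex ℝ {π : Fin m → Fin n → ℝ | InPolytope a b π} := by
  rintro π ⟨hπ0, hπr, hπc⟩ σ ⟨hσ0, hσr, hσc⟩ s t hs ht hst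
  refine ⟨fun i j => ?_, fun i => ?_, fun j => ?_⟩
  · simp only [Pi.add_apply, Pi.smul_apply, smul_eq_mul]
    have := hπ0 i j; have := hσ0 i j; positivity
  · simp only [Pi.add_apply, Pi.smul_apply, smul_eq_mul, sum_add_distrib, ← mul_sum, hπr, hσr,
      ← add_mul, hst, one_mul]
  · simp only [Pi.add_apply, Pi.smul_apply, smul_eq_mul, sum_add_distrib, ← mul_sum, hπc, hσc,
      ← add_mul, hst, one_mul]

lemma InPolytope.le_row {π : Fin m → Fin n → ℝ} (hπ : InPolytope a b π) (i : Fin m) (j : Fin n) :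
    π i j ≤ a i :=
  hπ.2.1 i ▸ single_le_sum (fun j _ => hπ.1 i j) (mem_univ j)

lemma isCompact_polytope : IsCompact {π : Fin m → Fin n → ℝ | InPolytope a b π} := by
  refine (isCompact_univ_pi fun i => isCompact_univ_pi fun _ => isCompact_Icc (a := 0) (b := a i))
    |>.of_isClosed_subset ?_ fun π hπ => Set.mem_univ_pi.2 fun i => Set.mem_univ_pi.2 fun j =>
      ⟨hπ.1 i j, hπ.le_row i j⟩
  simp only [InPolytope, Set.ofPred_and, Set.ofPred_forall]
  refine .inter (isClosed_iInter fun i => isClosed_iInter fun j => isClosed_le ?_ ?_) (.inter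
    (isClosed_iInter fun i => isClosed_eq ?_ ?_) (isClosed_iInter fun j => isClosed_eq ?_ ?_)) <;>
  fun_prop

lemma outer_mem_polytope (ha : ∀ i, 0 ≤ a i) (hb : ∀ j, 0 ≤ b j)
    (ha1 : ∑ i, a i = 1) (hb1 : ∑ j, b j = 1) : InPolytope a b (fun i j => a i * b j) :=
  ⟨fun i j => mul_nonneg (ha i) (hb j), fun i => by rw [← mul_sum, hb1, mul_one],
    fun j => by rw [← sum_mul, ha1, one_mul]⟩

end Polytope

section Objective

variable {m n : ℕ} {C : Fin m → Fin n → ℝ} {ε : ℝ}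

lemma entObj_eq_sum (π : Fin m → Fin n → ℝ) :
    entObj C ε π = ∑ i, ∑ j, entCost (C i j) ε (π i j) := by
  simp only [entObj, shannonH, entCost, sum_add_distrib, ← mul_sum]
  ring

lemma continuous_entObj : Continuous (entObj C ε) := by
  simp only [funext entObj_eq_sum, entCost]
  fun_prop

lemma strictConvexOn_entObj (hε : 0 < ε) :
    StrictConvexOn ℝ {π : Fin m → Fin n → ℝ | ∀ i j, 0 ≤ π i j} (entObj C ε) := by
  refine ⟨?_, fun π hπ σ hσ hne s t hs ht hst => ?_⟩
  · intro π hπ σ hσ s t hs ht _ i j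
    simp only [Pi.add_apply, Pi.smul_apply, smul_eq_mul]
    have := hπ i j; have := hσ i j; positivity
  obtain ⟨i₀, j₀, hne⟩ : ∃ i j, π i j ≠ σ i j := by
    by_contra! h; exact hne (funext₂ h)
  have hconv := fun i j => (strictConvexOn_entCost (c := C i j) hε).convexOn.2
    (Set.mem_Ici.2 (hπ i j)) (Set.mem_Ici.2 (hσ i j)) hs.le ht.le hst
  have hstrict := (strictConvexOn_entCost (c := C i₀ j₀) hε).2
    (Set.mem_Ici.2 (hπ i₀ j₀)) (Set.mem_Ici.2 (hσ i₀ j₀)) hne hs ht hst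
  simp only [entObj_eq_sum, smul_eq_mul, mul_sum, ← sum_add_distrib, Pi.add_apply,
    Pi.smul_apply] at hconv hstrict ⊢
  exact sum_lt_sum (fun i _ => sum_le_sum fun j _ => hconv i j)
    ⟨i₀, mem_univ _, sum_lt_sum (fun j _ => hconv i₀ j) ⟨j₀, mem_univ _, hstrict⟩⟩

lemma entObj_add_smul_sub_le (hε : 0 < ε) {π σ : Fin m → Fin n → ℝ} (hπ : ∀ i j, 0 ≤ π i j)
    (hσ : ∀ i j, 0 ≤ σ i j) {i₀ : Fin m} {j₀ : Fin n} (h0 : π i₀ j₀ = 0) {t : ℝ} (ht0 : 0 ≤ t)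
    (ht1 : t ≤ 1) :
    entObj C ε (π + t • (σ - π)) ≤
      entObj C ε π + t * (entObj C ε σ - entObj C ε π) + ε * (t * σ i₀ j₀) * Real.log t := by
  set δ : Fin m → Fin n → ℝ := fun i j => entCost (C i j) ε (π i j + t * (σ i j - π i j)) -
    (entCost (C i j) ε (π i j) + t * (entCost (C i j) ε (σ i j) - entCost (C i j) ε (π i j)))
  have hδ : ∀ i j, δ i j ≤ 0 := fun i j =>
    sub_nonpos.2 (entCost_add_mul_sub_le hε (hπ i j) (hσ i j) ht0 ht1)
  have hδ₀ : δ i₀ j₀ = ε * (t * σ i₀ j₀) * Real.log t := by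
    simp only [δ, h0, sub_zero, zero_add, entCost_mul]
    simp [entCost]
  have hsum : entObj C ε (π + t • (σ - π)) -
      (entObj C ε π + t * (entObj C ε σ - entObj C ε π)) = ∑ i, ∑ j, δ i j := by
    simp only [δ, entObj_eq_sum, sum_sub_distrib, sum_add_distrib, mul_sub, mul_sum, Pi.add_apply,
      Pi.smul_apply, Pi.sub_apply, smul_eq_mul]
  have := (Fintype.sum_le_apply_of_nonpos (fun i => sum_nonpos fun j _ => hδ i j) i₀).trans
    (Fintype.sum_le_apply_of_nonpos (hδ i₀) j₀)
  linarith

end Objective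

section Minimiser

variable {m n : ℕ} {C : Fin m → Fin n → ℝ} {ε : ℝ} {a : Fin m → ℝ} {b : Fin n → ℝ}
  {π : Fin m → Fin n → ℝ}

lemma pos_of_isMinOn (hε : 0 < ε) {σ : Fin m → Fin n → ℝ} (hσ : InPolytope a b σ)
    (hσpos : ∀ i j, 0 < σ i j) (hπ : InPolytope a b π)
    (hmin : IsMinOn (entObj C ε) {π | InPolytope a b π} π) (i₀ : Fin m) (j₀ : Fin n) :
    0 < π i₀ j₀ := by
  by_contra! h
  have h0 : π i₀ j₀ = 0 := le_antisymm h (hπ.1 i₀ j₀)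
  -- `x log x` has slope `-∞` at `0`, so moving towards `σ` gains `ε σ₀ t log t`, which beats `O(t)`.
  obtain ⟨t, ⟨ht0, ht1⟩, hneg⟩ := (Eventually.and (Ioo_mem_nhdsGT one_pos)
    ((tendsto_atBot_add_const_left _ (entObj C ε σ - entObj C ε π)
      (Real.tendsto_log_nhdsGT_zero.const_mul_atBot (mul_pos hε (hσpos i₀ j₀)))).eventually_lt_atBot
        0)).exists
  have hle := entObj_add_smul_sub_le (C := C) hε hπ.1 hσ.1 h0 ht0.le ht1.le
  have hge := isMinOn_iff.1 hmin _ (convex_polytope.add_smul_sub_mem hπ hσ ⟨ht0.le, ht1.le⟩)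
  nlinarith [mul_neg_of_pos_of_neg ht0 hneg]

lemma hasDerivAt_entObj_add_smul (hpos : ∀ i j, 0 < π i j) (d : Fin m → Fin n → ℝ) :
    HasDerivAt (fun t : ℝ => entObj C ε (π + t • d))
      (∑ i, ∑ j, (C i j + ε * (Real.log (π i j) + 1)) * d i j) 0 := by
  simp only [entObj_eq_sum, Pi.add_apply, Pi.smul_apply, smul_eq_mul]
  refine HasDerivAt.fun_sum fun i _ => HasDerivAt.fun_sum fun j _ => ?_
  have hline : HasDerivAt (fun t : ℝ => π i j + t * d i j) (d i j) 0 := by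
    simpa using ((hasDerivAt_id' (0 : ℝ)).mul_const (d i j)).const_add (π i j)
  exact (hasDerivAt_entCost (hpos i j).ne').comp_of_eq 0 hline (by simp)

lemma sum_mul_eq_zero_of_isMinOn (hπ : InPolytope a b π) (hpos : ∀ i j, 0 < π i j)
    (hmin : IsMinOn (entObj C ε) {π | InPolytope a b π} π) {d : Fin m → Fin n → ℝ}
    (hrow : ∀ i, ∑ j, d i j = 0) (hcol : ∀ j, ∑ i, d i j = 0) :
    ∑ i, ∑ j, (C i j + ε * (Real.log (π i j) + 1)) * d i j = 0 := by
  refine IsLocalMin.hasDerivAt_eq_zero ?_ (hasDerivAt_entObj_add_smul hpos d)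
  have hnear : ∀ᶠ t in 𝓝 (0 : ℝ), ∀ i j, 0 < π i j + t * d i j :=
    eventually_all.2 fun i => eventually_all.2 fun j =>
      (Continuous.tendsto (f := fun t => π i j + t * d i j) (by fun_prop) 0).eventually
        (lt_mem_nhds (by simpa using hpos i j))
  filter_upwards [hnear] with t ht
  rw [zero_smul, add_zero]
  refine isMinOn_iff.1 hmin _ ⟨fun i j => (ht i j).le, fun i => ?_, fun j => ?_⟩
  · simp [sum_add_distrib, ← mul_sum, hπ.2.1 i, hrow i]
  · simp [sum_add_distrib, ← mul_sum, hπ.2.2 j, hcol j]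

end Minimiser

-- `log (π i j / K i j)` for the Gibbs kernel `K i j = exp (-C i j / ε)`.
noncomputable def logGibbsRatio {m n : ℕ} (C : Fin m → Fin n → ℝ) (ε : ℝ)
    (π : Fin m → Fin n → ℝ) (i : Fin m) (j : Fin n) : ℝ :=
  Real.log (π i j) + C i j / ε

section Scaling

variable {m n : ℕ} {C : Fin m → Fin n → ℝ} {ε : ℝ} {a : Fin m → ℝ} {b : Fin n → ℝ}
  {π : Fin m → Fin n → ℝ}

lemma logGibbsRatio_rectangle (hε : 0 < ε) (hπ : InPolytope a b π) (hpos : ∀ i j, 0 < π i j)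
    (hmin : IsMinOn (entObj C ε) {π | InPolytope a b π} π) (i i' : Fin m) (j j' : Fin n) :
    logGibbsRatio C ε π i j + logGibbsRatio C ε π i' j' =
      logGibbsRatio C ε π i j' + logGibbsRatio C ε π i' j := by
  set r : Fin m → ℝ := Pi.single i 1 - Pi.single i' 1
  set c : Fin n → ℝ := Pi.single j 1 - Pi.single j' 1
  have hr : ∑ k, r k = 0 := by simp [r]
  have hc : ∑ l, c l = 0 := by simp [c]
  have h := sum_mul_eq_zero_of_isMinOn (d := fun k l => r k * c l) hπ hpos hmin
    (fun k => by rw [← mul_sum, hc, mul_zero]) (fun l => by rw [← sum_mul, hr, zero_mul])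
  simp only [r, c, Pi.sub_apply, Pi.single_apply, mul_sub, mul_ite, mul_one, mul_zero,
    sum_sub_distrib, sum_ite_eq', mem_univ, ↓reduceIte] at h
  simp only [logGibbsRatio]
  field_simp
  linarith

lemma exists_scaling_of_rectangle (hpos : ∀ i j, 0 < π i j) (i₀ : Fin m) (j₀ : Fin n)
    (h : ∀ i j, logGibbsRatio C ε π i j + logGibbsRatio C ε π i₀ j₀ =
      logGibbsRatio C ε π i j₀ + logGibbsRatio C ε π i₀ j) :
    ∃ (u : Fin m → ℝ) (v : Fin n → ℝ), (∀ i, 0 < u i) ∧ (∀ j, 0 < v j) ∧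
      ∀ i j, π i j = u i * Real.exp (-C i j / ε) * v j := by
  refine ⟨fun i => Real.exp (logGibbsRatio C ε π i j₀),
    fun j => Real.exp (logGibbsRatio C ε π i₀ j - logGibbsRatio C ε π i₀ j₀),
    fun _ => Real.exp_pos _, fun _ => Real.exp_pos _, fun i j => ?_⟩
  have hlog : Real.log (π i j) = logGibbsRatio C ε π i j₀ + -C i j / ε +
      (logGibbsRatio C ε π i₀ j - logGibbsRatio C ε π i₀ j₀) := by
    have := h i j
    simp only [logGibbsRatio] at this ⊢
    rw [neg_div]
    linarith
  rw [← Real.exp_add, ← Real.exp_add, ← hlog, Real.exp_log (hpos i j)]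

end Scaling

/-- the minimiser of the entropy-regularised transport problem over
`U(a,b)` (with strictly positive marginals) exists, is unique, and is of the Sinkhorn
form `π† = diag(u) K diag(v)` with `u, v > 0` and `K_{ij} = exp(−C_{ij}/ε)`. -/
theorem sinkhorn_minimiser {m n : ℕ} (C : Fin m → Fin n → ℝ) (ε : ℝ) (hε : 0 < ε)
    (a : Fin m → ℝ) (b : Fin n → ℝ)
    (ha : ∀ i, 0 < a i) (hb : ∀ j, 0 < b j)
    (ha1 : ∑ i, a i = 1) (hb1 : ∑ j, b j = 1) :
    ∃ πopt : Fin m → Fin n → ℝ,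
      InPolytope a b πopt ∧
      (∀ π : Fin m → Fin n → ℝ, InPolytope a b π → entObj C ε πopt ≤ entObj C ε π) ∧
      (∀ π : Fin m → Fin n → ℝ, InPolytope a b π →
        (∀ π' : Fin m → Fin n → ℝ, InPolytope a b π' → entObj C ε π ≤ entObj C ε π') →
        π = πopt) ∧
      (∃ (u : Fin m → ℝ) (v : Fin n → ℝ), (∀ i, 0 < u i) ∧ (∀ j, 0 < v j) ∧
        ∀ i j, πopt i j = u i * Real.exp (-C i j / ε) * v j) := by
  have hab := outer_mem_polytope (fun i => (ha i).le) (fun j => (hb j).le) ha1 hb1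
  obtain ⟨πopt, hmem, hmin⟩ :=
    isCompact_polytope.exists_isMinOn ⟨_, hab⟩ continuous_entObj.continuousOn (f := entObj C ε)
  have hpos := pos_of_isMinOn hε hab (fun i j => mul_pos (ha i) (hb j)) hmem hmin
  refine ⟨πopt, hmem, isMinOn_iff.1 hmin, fun π hπ hπmin => ?_, ?_⟩
  · exact ((strictConvexOn_entObj hε).subset (fun π hπ => hπ.1) convex_polytope).eq_of_isMinOn
      (isMinOn_iff.2 hπmin) hmin hπ hmem
  · obtain ⟨i₀, -⟩ := nonempty_of_sum_ne_zero (ha1 ▸ one_ne_zero : ∑ i, a i ≠ 0)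
    obtain ⟨j₀, -⟩ := nonempty_of_sum_ne_zero (hb1 ▸ one_ne_zero : ∑ j, b j ≠ 0)
    exact exists_scaling_of_rectangle hpos i₀ j₀
      fun i j => logGibbsRatio_rectangle hε hmem hpos hmin i i₀ j j₀
end
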